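/- arXiv:2603.27779 — 10 statements merged into one kernel-verified Lean document; each statement's English description precedes it below -/
import Mathlib

section
/- For a cost vector c ∈ ℝ_{>0}^n, the allocation x_i = c_i^{-α} / Σ_j c_j^{-α} minimizes the objective Σ_i c_i x_i^{1+1/α} over all vectors x ∈ [0,1]^n with Σ_i x_i = 1. -/
/-!
With `p = 1 + 1/α`, the allocation `x` equalises the marginal costs: `c i * x i ^ (p - 1)` is the
same constant `λ` for every `i`. Since `t ↦ t ^ p` is convex, each `c i * y i ^ p` lies above the
tangent `c i * x i ^ p + p * λ * (y i - x i)`, and summing, the linear terms cancel because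
`∑ x = ∑ y`.
-/

open Finset

lemma rpow_add_mul_rpow_sub_one_mul_sub_le {a b p : ℝ} (ha : 0 < a) (hb : 0 ≤ b)
    (hp : 1 ≤ p) : a ^ p + p * a ^ (p - 1) * (b - a) ≤ b ^ p := by
  have hba : -1 ≤ b / a - 1 := by linarith [div_nonneg hb ha.le]
  have bernoulli := one_add_mul_self_le_rpow_one_add hba hp
  rw [add_sub_cancel, Real.div_rpow hb ha.le, le_div_iff₀ (by positivity)] at bernoulli
  calc a ^ p + p * a ^ (p - 1) * (b - a) = (1 + p * (b / a - 1)) * a ^ p := by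
        rw [Real.rpow_sub_one ha.ne']; field_simp
    _ ≤ b ^ p := bernoulli

theorem sum_mul_rpow_le_of_mul_rpow_sub_one_eq {ι : Type*} (s : Finset ι) {p lam : ℝ}
    (hp : 1 ≤ p) {c x y : ι → ℝ} (hc : ∀ i ∈ s, 0 ≤ c i) (hx : ∀ i ∈ s, 0 < x i)
    (hy : ∀ i ∈ s, 0 ≤ y i) (hcx : ∀ i ∈ s, c i * x i ^ (p - 1) = lam)
    (hsum : ∑ i ∈ s, x i = ∑ i ∈ s, y i) :
    ∑ i ∈ s, c i * x i ^ p ≤ ∑ i ∈ s, c i * y i ^ p := by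
  calc ∑ i ∈ s, c i * x i ^ p = ∑ i ∈ s, (c i * x i ^ p + p * lam * (y i - x i)) := by
        rw [sum_add_distrib, ← mul_sum, sum_sub_distrib, hsum, sub_self, mul_zero, add_zero]
    _ ≤ ∑ i ∈ s, c i * y i ^ p := sum_le_sum fun i hi => by
        rw [← hcx i hi]
        linear_combination mul_le_mul_of_nonneg_left
          (rpow_add_mul_rpow_sub_one_mul_sub_le (hx i hi) (hy i hi) hp) (hc i hi)

lemma mul_rpow_neg_div_rpow_inv {α c S : ℝ} (hα : α ≠ 0) (hc : 0 < c) (hS : 0 ≤ S) :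
    c * (c ^ (-α) / S) ^ α⁻¹ = S ^ (-α⁻¹) := by
  rw [Real.div_rpow (by positivity) hS, ← Real.rpow_mul hc.le, neg_mul, mul_inv_cancel₀ hα,
    Real.rpow_neg hS, Real.rpow_neg_one]
  field_simp

theorem alpha_par_minimizes_general
    (n : ℕ) (α : ℝ) (hα : 0 < α)
    (c : Fin n → ℝ) (hc : ∀ i, 0 < c i)
    (x : Fin n → ℝ)
    (hx : ∀ i, x i = c i ^ (-α) / ∑ j, c j ^ (-α))
    (y : Fin n → ℝ) (hy0 : ∀ i, 0 ≤ y i)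
    (hysum : ∑ i, y i = 1) :
    ∑ i, c i * x i ^ (1 + 1/α) ≤ ∑ i, c i * y i ^ (1 + 1/α) := by
  have hne : (univ : Finset (Fin n)).Nonempty := by
    by_contra h
    simp [not_nonempty_iff_eq_empty.mp h] at hysum
  have hS : 0 < ∑ j, c j ^ (-α) := sum_pos (fun j _ => Real.rpow_pos_of_pos (hc j) _) hne
  have hxsum : ∑ i, x i = 1 := by
    simp only [hx, ← sum_div, div_self hS.ne']
  refine sum_mul_rpow_le_of_mul_rpow_sub_one_eq univ (lam := (∑ j, c j ^ (-α)) ^ (-α⁻¹))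
    (by simp [hα.le]) (fun i _ => (hc i).le) (fun i _ => ?_) (fun i _ => hy0 i) (fun i _ => ?_)
    (hxsum.trans hysum.symm)
  · rw [hx i]; exact div_pos (Real.rpow_pos_of_pos (hc i) _) hS
  · rw [hx i, add_sub_cancel_left, one_div]
    exact mul_rpow_neg_div_rpow_inv hα.ne' (hc i) hS.le

theorem alpha_par_minimizes
    (n : ℕ) (hn : 1 ≤ n) (α : ℝ) (hα : 0 < α)
    (c : Fin n → ℝ) (hc : ∀ i, 0 < c i)
    (x : Fin n → ℝ)
    (hx : ∀ i, x i = c i ^ (-α) / ∑ j, c j ^ (-α))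
    (y : Fin n → ℝ) (hy0 : ∀ i, 0 ≤ y i) (hy1 : ∀ i, y i ≤ 1)
    (hysum : ∑ i, y i = 1) :
    ∑ i, c i * x i ^ (1 + 1/α) ≤ ∑ i, c i * y i ^ (1 + 1/α) :=
  alpha_par_minimizes_general n α hα c hc x hx y hy0 hysum
end

section
/- For any cost vector c with 1 = c_1 ≤ c_i for all i, and α > 1, the social cost of the α-proportional allocation satisfies SC(c) = (Σ_i c_i^{1-α}) / (Σ_i c_i^{-α}) ≤ 1 + (n/α)^{1/α}. -/
open Finset

theorem dsic_social_cost_bound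
    (n : ℕ) (hn : 1 ≤ n) (α : ℝ) (hα : 1 < α)
    (c : Fin n → ℝ) (hc1 : c ⟨0, hn⟩ = 1) (hc : ∀ i, 1 ≤ c i) :
    (∑ i, c i ^ (1 - α)) / (∑ i, c i ^ (-α)) ≤ 1 + ((n : ℝ) / α) ^ (1/α) := by
  have hα0 : (0:ℝ) < α := by linarith
  have hn0 : (0:ℝ) < (n:ℝ) := by exact_mod_cast hn
  have hnα : (0:ℝ) < (n:ℝ)/α := div_pos hn0 hα0
  set B : ℝ := ((n : ℝ) / α) ^ (1/α) with hBdef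
  have hBpos : 0 < B := Real.rpow_pos_of_pos hnα _
  have hBα : B ^ α = (n:ℝ)/α := by
    rw [hBdef, ← Real.rpow_mul hnα.le, one_div_mul_cancel hα0.ne', Real.rpow_one]
  set d : ℝ := 1 + B with hd
  have hd1 : 1 ≤ d := by simp [hd]; positivity
  have hd0 : 0 < d := by linarith
  set i0 : Fin n := ⟨0, hn⟩ with hi0
  -- positivity of c
  have hcpos : ∀ i, (0:ℝ) < c i := fun i => lt_of_lt_of_le one_pos (hc i)
  -- per-term bound for i ≠ i0 : (c i - d) * (c i)^(-α) ≤ d^(1-α)/α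
  have key : ∀ i : Fin n, (c i - d) * (c i) ^ (-α) ≤ d ^ (1-α) / α := by
    intro i
    set x := c i with hx
    have hx0 : 0 < x := hcpos i
    have hA : (0:ℝ) < x ^ α := Real.rpow_pos_of_pos hx0 _
    have hD : (0:ℝ) < d ^ α := Real.rpow_pos_of_pos hd0 _
    -- Bernoulli: 1 + α*(x/d - 1) ≤ (x/d)^α
    have hs : (-1:ℝ) ≤ x/d - 1 := by
      have : 0 < x/d := div_pos hx0 hd0
      linarith
    have hber := one_add_mul_self_le_rpow_one_add hs hα.le
    have hrw : (1:ℝ) + (x/d - 1) = x/d := by ring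
    rw [hrw] at hber
    have hdiv : (x/d) ^ α = x ^ α / d ^ α := Real.div_rpow hx0.le hd0.le α
    rw [hdiv] at hber
    -- so (1 + α*(x/d-1)) * d^α ≤ x^α
    have h2 : (1 + α * (x/d - 1)) * d ^ α ≤ x ^ α := (le_div_iff₀ hD).mp hber
    -- rewrite goal
    have hxneg : x ^ (-α) = (x ^ α)⁻¹ := by
      rw [Real.rpow_neg hx0.le]
    have hdpow : d ^ (1-α) = d / d ^ α := by
      rw [show (1:ℝ) - α = 1 + (-α) by ring, Real.rpow_add hd0, Real.rpow_one,
        Real.rpow_neg hd0.le, div_eq_mul_inv]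
    rw [hxneg, hdpow, mul_inv_le_iff₀ hA, div_div]
    rw [div_mul_eq_mul_div, le_div_iff₀ (by positivity)]
    -- need (x - d) * (d^α * α) ≤ d * x^α
    have h3 : α * (x/d - 1) * d = α * (x - d) := by
      field_simp
    have h4 := mul_le_mul_of_nonneg_right h2 hd0.le
    have hexp : (1 + α * (x/d - 1)) * d ^ α * d = d ^ α * d + α * (x - d) * d ^ α := by
      field_simp
    rw [hexp] at h4
    nlinarith [h4, mul_pos hD hd0]
  -- sums
  set S : ℝ := ∑ i, c i ^ (-α) with hS
  set T : ℝ := ∑ i, c i ^ (1-α) with hT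
  have hterm0 : c i0 ^ (-α) = 1 := by rw [hc1, Real.one_rpow]
  have hSnn : ∀ i ∈ (univ : Finset (Fin n)), (0:ℝ) ≤ c i ^ (-α) := fun i _ =>
    (Real.rpow_pos_of_pos (hcpos i) _).le
  have hS1 : 1 ≤ S := by
    have := Finset.single_le_sum hSnn (mem_univ i0)
    rwa [hterm0] at this
  have hS0 : 0 < S := lt_of_lt_of_le one_pos hS1
  rw [div_le_iff₀ hS0]
  -- T ≤ d * S
  have hsplit : T - d * S = ∑ i, (c i - d) * c i ^ (-α) := by
    rw [hT, hS, Finset.mul_sum, ← Finset.sum_sub_distrib]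
    refine Finset.sum_congr rfl fun i _ => ?_
    have : c i ^ (1-α) = c i * c i ^ (-α) := by
      rw [show (1:ℝ) - α = 1 + (-α) by ring, Real.rpow_add (hcpos i), Real.rpow_one]
    rw [this]; ring
  have hrest : ∑ i ∈ univ.erase i0, (c i - d) * c i ^ (-α) ≤ B := by
    calc ∑ i ∈ univ.erase i0, (c i - d) * c i ^ (-α)
        ≤ (univ.erase i0).card • (d ^ (1-α) / α) :=
          Finset.sum_le_card_nsmul _ _ _ (fun i _ => key i)
      _ = ((n - 1 : ℕ) : ℝ) * (d ^ (1-α) / α) := by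
          rw [Finset.card_erase_of_mem (mem_univ i0), card_univ, Fintype.card_fin,
            nsmul_eq_mul]
      _ ≤ (n : ℝ) * (d ^ (1-α) / α) := by
          apply mul_le_mul_of_nonneg_right
          · exact_mod_cast Nat.sub_le n 1
          · positivity
      _ ≤ (n : ℝ) * (B ^ (1-α) / α) := by
          have hdB : d ^ (1-α) ≤ B ^ (1-α) :=
            Real.rpow_le_rpow_of_nonpos hBpos (by rw [hd]; linarith) (by linarith)
          exact mul_le_mul_of_nonneg_left (div_le_div_of_nonneg_right hdB hα0.le) hn0.le
      _ = B := by
          have h4 : (n:ℝ) * (B ^ (1-α) / α) = B ^ α * B ^ (1-α) := by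
            rw [hBα]; ring
          rw [h4, ← Real.rpow_add hBpos]; norm_num
  have hmain : T - d * S ≤ 0 := by
    rw [hsplit, ← Finset.add_sum_erase _ _ (mem_univ i0), hterm0, hc1]
    have : (1 - d) * 1 = -B := by rw [hd]; ring
    rw [this]
    linarith [hrest]
  have : (1 + ((n:ℝ)/α) ^ (1/α)) * S = d * S := by rw [hd, hBdef]
  rw [this]
  linarith
end

section
/- For n ≥ 2, α > 1, and r ≥ 1, the function f(r) = (1+(n-1)r^{1-α})/(1+(n-1)r^{-α}) attains its maximum over r ≥ 1 at the unique root x* of B(x) = α + x(1-α) + (n-1)x^{1-α} = 0 with x* > 1, and the maximum value equals 1 + T(x*)/α where T(r) = (n-1)r^{1-α}. -/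
/-!
Writing `m = n - 1`, the quotient rule gives
`f' r = m r^(-α-1) B(r) / (1 + m r^(-α))²`, so `f'` has the sign of `B`. Since
`B' x = (1 - α)(1 + m x^(-α)) < 0`, `B` is strictly decreasing, with `B 1 = 1 + m > 0` and
`B x → -∞`; hence `B` has exactly one root `x* > 1`, and `f` increases up to `x*` and decreases
after it. At the root, `m x*^(1-α) = (α - 1) x* - α`, which turns both `f x*` and `1 + T x*/α`
into `(α - 1) x* / α`.
-/

open Real Set

namespace AlphaProportional

/-- `m` stands for `n - 1`, the number of players with cost `r`. -/
noncomputable def socialCost (α m r : ℝ) : ℝ := (1 + m * r ^ (1 - α)) / (1 + m * r ^ (-α))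

noncomputable def B (α m x : ℝ) : ℝ := α + x * (1 - α) + m * x ^ (1 - α)

variable {α m x : ℝ}

lemma hasDerivAt_rpow_one_sub (hx : x ≠ 0) :
    HasDerivAt (fun x : ℝ => x ^ (1 - α)) ((1 - α) * x ^ (-α)) x := by
  simpa using Real.hasDerivAt_rpow_const (p := 1 - α) (Or.inl hx)

lemma hasDerivAt_B (hx : x ≠ 0) : HasDerivAt (B α m) ((1 - α) * (1 + m * x ^ (-α))) x := by
  have := ((hasDerivAt_const x α).add ((hasDerivAt_id x).mul_const (1 - α))).add
    ((hasDerivAt_rpow_one_sub (α := α) hx).const_mul m)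
  exact this.congr_deriv (by ring)

lemma continuousOn_B : ContinuousOn (B α m) (Ioi 0) :=
  fun _ hx => (hasDerivAt_B (ne_of_gt hx)).continuousAt.continuousWithinAt

lemma one_add_mul_rpow_pos (hm : 0 ≤ m) (hx : 0 < x) : 0 < 1 + m * x ^ (-α) := by
  have := rpow_pos_of_pos hx (-α)
  positivity

lemma strictAntiOn_B (hα : 1 < α) (hm : 0 ≤ m) : StrictAntiOn (B α m) (Ioi 0) := by
  refine strictAntiOn_of_deriv_neg (convex_Ioi 0) continuousOn_B ?_
  intro x hx
  rw [interior_Ioi] at hx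
  rw [(hasDerivAt_B (ne_of_gt hx)).deriv]
  exact mul_neg_of_neg_of_pos (by linarith) (one_add_mul_rpow_pos hm hx)

lemma B_one : B α m 1 = 1 + m := by
  simp only [B, one_rpow]; ring

/-- For `x ≥ 1`, `B x ≤ α + m + x (1 - α)`, and this bound equals `1 - α` at the given point. -/
lemma B_neg (hα : 1 < α) (hm : 0 ≤ m) : B α m ((α + m) / (α - 1) + 1) < 0 := by
  have hα' : α - 1 ≠ 0 := by linarith
  have hx : 1 ≤ (α + m) / (α - 1) + 1 :=
    le_add_of_nonneg_left (div_nonneg (by linarith) (by linarith))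
  have hpow : ((α + m) / (α - 1) + 1) ^ (1 - α) ≤ 1 :=
    rpow_le_one_of_one_le_of_nonpos hx (by linarith)
  have hlin : ((α + m) / (α - 1) + 1) * (1 - α) = -(α + m) - (α - 1) := by
    field_simp; ring
  unfold B
  nlinarith

lemma exists_B_eq_zero (hα : 1 < α) (hm : 0 ≤ m) : ∃ x, 1 < x ∧ B α m x = 0 := by
  set M := (α + m) / (α - 1) + 1
  have hM : 1 ≤ M := le_add_of_nonneg_left (div_nonneg (by linarith) (by linarith))
  obtain ⟨x, hx, hBx⟩ := intermediate_value_Icc' hM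
    (continuousOn_B.mono fun y hy => lt_of_lt_of_le one_pos hy.1)
    (show (0 : ℝ) ∈ Icc (B α m M) (B α m 1) from ⟨(B_neg hα hm).le, by rw [B_one]; linarith⟩)
  refine ⟨x, lt_of_le_of_ne hx.1 ?_, hBx⟩
  rintro rfl
  rw [B_one] at hBx
  linarith

lemma hasDerivAt_socialCost (hm : 0 ≤ m) (hx : 0 < x) :
    HasDerivAt (socialCost α m)
      (m * x ^ (-α - 1) / (1 + m * x ^ (-α)) ^ 2 * B α m x) x := by
  have hN := (hasDerivAt_rpow_one_sub (α := α) hx.ne').const_mul m |>.const_add 1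
  have hD := (Real.hasDerivAt_rpow_const (x := x) (p := -α) (Or.inl hx.ne')).const_mul m
    |>.const_add 1
  refine (hN.div hD (one_add_mul_rpow_pos hm hx).ne').congr_deriv ?_
  have e1 : x ^ (1 - α) = x * x ^ (-α) := by
    rw [show 1 - α = 1 + -α by ring, rpow_add hx, rpow_one]
  have e2 : x ^ (-α - 1) = x ^ (-α) / x := by
    rw [show -α - 1 = -α + -1 by ring, rpow_add hx, rpow_neg_one, div_eq_mul_inv]
  have := one_add_mul_rpow_pos (α := α) hm hx
  unfold B
  rw [e1, e2]
  field_simp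
  ring

lemma socialCost_deriv_factor_nonneg (hm : 0 ≤ m) (hx : 0 < x) :
    0 ≤ m * x ^ (-α - 1) / (1 + m * x ^ (-α)) ^ 2 := by
  have := rpow_pos_of_pos hx (-α - 1)
  positivity

lemma continuousOn_socialCost (hm : 0 ≤ m) : ContinuousOn (socialCost α m) (Ioi 0) :=
  fun _ hx => (hasDerivAt_socialCost hm hx).continuousAt.continuousWithinAt

variable {x₀ : ℝ}

lemma monotoneOn_socialCost (hα : 1 < α) (hm : 0 ≤ m) (hB : B α m x₀ = 0) :
    MonotoneOn (socialCost α m) (Ioc 0 x₀) := by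
  have hsub : Ioc 0 x₀ ⊆ Ioi 0 := Ioc_subset_Ioi_self
  refine monotoneOn_of_deriv_nonneg (convex_Ioc 0 x₀) ((continuousOn_socialCost hm).mono hsub)
    (fun x hx => ?_) (fun x hx => ?_) <;> rw [interior_Ioc] at hx
  · exact (hasDerivAt_socialCost hm hx.1).differentiableAt.differentiableWithinAt
  · have hBx : 0 ≤ B α m x := hB ▸ (strictAntiOn_B hα hm hx.1 (hx.1.trans hx.2) hx.2).le
    rw [(hasDerivAt_socialCost hm hx.1).deriv]
    exact mul_nonneg (socialCost_deriv_factor_nonneg hm hx.1) hBx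

lemma antitoneOn_socialCost (hα : 1 < α) (hm : 0 ≤ m) (hx₀ : 0 < x₀) (hB : B α m x₀ = 0) :
    AntitoneOn (socialCost α m) (Ici x₀) := by
  have hsub : Ici x₀ ⊆ Ioi 0 := Ici_subset_Ioi.mpr hx₀
  refine antitoneOn_of_deriv_nonpos (convex_Ici x₀) ((continuousOn_socialCost hm).mono hsub)
    (fun x hx => ?_) (fun x hx => ?_) <;> rw [interior_Ici] at hx
  · exact (hasDerivAt_socialCost hm (hx₀.trans hx)).differentiableAt.differentiableWithinAt
  · have hBx : B α m x ≤ 0 := hB ▸ (strictAntiOn_B hα hm hx₀ (hx₀.trans hx) hx).le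
    rw [(hasDerivAt_socialCost hm (hx₀.trans hx)).deriv]
    exact mul_nonpos_of_nonneg_of_nonpos (socialCost_deriv_factor_nonneg hm (hx₀.trans hx)) hBx

lemma isMaxOn_socialCost (hα : 1 < α) (hm : 0 ≤ m) (hx₀ : 0 < x₀) (hB : B α m x₀ = 0) :
    IsMaxOn (socialCost α m) (Ioi 0) x₀ := by
  intro r (hr : 0 < r)
  rcases le_total r x₀ with h | h
  · exact monotoneOn_socialCost hα hm hB ⟨hr, h⟩ ⟨hx₀, le_rfl⟩ h
  · exact antitoneOn_socialCost hα hm hx₀ hB self_mem_Ici h h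

lemma socialCost_eq_of_B_eq_zero (hα : 0 < α) (hx : 1 < x) (hB : B α m x = 0) :
    socialCost α m x = 1 + m * x ^ (1 - α) / α := by
  have hx₀ : 0 < x := one_pos.trans hx
  have hroot : m * x ^ (1 - α) = (α - 1) * x - α := by unfold B at hB; linarith
  have hden : 1 + m * x ^ (-α) = α * (x - 1) / x := by
    rw [show -α = (1 - α) + -1 by ring, rpow_add hx₀, rpow_neg_one, ← mul_assoc, hroot]
    field_simp
    ring
  have : x - 1 ≠ 0 := sub_ne_zero.mpr hx.ne'
  rw [socialCost, hden, hroot]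
  field_simp
  ring

end AlphaProportional

open AlphaProportional in
theorem worst_case_r_characterization
    (n : ℕ) (hn : 2 ≤ n) (α : ℝ) (hα : 1 < α)
    (f : ℝ → ℝ)
    (hf : ∀ r : ℝ, f r = (1 + (n - 1 : ℝ) * r ^ (1 - α)) / (1 + (n - 1 : ℝ) * r ^ (-α)))
    (B : ℝ → ℝ)
    (hB : ∀ x : ℝ, B x = α + x * (1 - α) + (n - 1 : ℝ) * x ^ (1 - α))
    (T : ℝ → ℝ)
    (hT : ∀ r : ℝ, T r = (n - 1 : ℝ) * r ^ (1 - α)) :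
    ∃ xstar : ℝ, 1 < xstar ∧ B xstar = 0 ∧
      (∀ y : ℝ, 1 < y → B y = 0 → y = xstar) ∧
      (∀ r : ℝ, 1 ≤ r → f r ≤ f xstar) ∧
      f xstar = 1 + T xstar / α := by
  have hm : (0 : ℝ) ≤ n - 1 := by
    have : (2 : ℝ) ≤ n := by exact_mod_cast hn
    linarith
  obtain rfl : f = socialCost α (n - 1) := funext hf
  obtain rfl : B = AlphaProportional.B α (n - 1) := funext hB
  obtain ⟨x, hx, hBx⟩ := exists_B_eq_zero hα hm
  have hx₀ : 0 < x := one_pos.trans hx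
  refine ⟨x, hx, hBx, fun y hy hBy => ?_, fun r hr => ?_, ?_⟩
  · exact (strictAntiOn_B hα hm).injOn (one_pos.trans hy) hx₀ (hBy.trans hBx.symm)
  · exact isMaxOn_socialCost hα hm hx₀ hBx (one_pos.trans_le hr)
  · rw [hT]
    exact socialCost_eq_of_B_eq_zero (by linarith) hx hBx
end

section
/- For n ≥ 2 and α > 1, the function B(x) = α + x(1-α) + (n-1)x^{1-α} is strictly decreasing on (0, ∞) and satisfies B((n/(α-1))^{1/α}) > 0; hence the unique root x* of B satisfies x* ≥ (n/(α-1))^{1/α}. -/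
/-!
`B` is a constant plus a decreasing linear term plus a nonnegative multiple of the decreasing
power `x ^ (1 - α)`, hence strictly decreasing. At `y = c ^ (1/α)` with `c = n / (α - 1)` we have
`y ^ (1 - α) = y / y ^ α = y / c`, and the terms collapse to `B y = α - y / c`. Since
`y ≤ max 1 c < α c`, this is positive, so the root of `B` lies to the right of `y`.
-/

open Set

namespace Real

theorem strictAntiOn_add_mul_add_mul_rpow {a b k p : ℝ} (hb : b < 0) (hk : 0 ≤ k) (hp : p < 0) :
    StrictAntiOn (fun x => a + x * b + k * x ^ p) (Ioi 0) := by
  intro x hx z hz hxz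
  have hlin : z * b < x * b := mul_lt_mul_of_neg_right hxz hb
  have hpow : k * z ^ p ≤ k * x ^ p :=
    mul_le_mul_of_nonneg_left (rpow_lt_rpow_of_neg hx hxz hp).le hk
  dsimp only
  linarith

theorem rpow_le_max_one_self {c p : ℝ} (hc : 0 ≤ c) (hp : 0 ≤ p) (hp1 : p ≤ 1) :
    c ^ p ≤ max 1 c := by
  rcases le_total c 1 with h | h
  · exact (rpow_le_one hc h hp).trans (le_max_left _ _)
  · exact (rpow_le_self_of_one_le h hp1).trans (le_max_right _ _)

theorem rpow_one_div_lt_mul_self {c α : ℝ} (hc : 0 < c) (hα : 1 < α) (hαc : 1 < α * c) :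
    c ^ (1 / α) < α * c := by
  have hroot : c ^ (1 / α) ≤ max 1 c :=
    rpow_le_max_one_self hc.le (by positivity) ((div_le_one (by linarith)).2 hα.le)
  exact hroot.trans_lt (max_lt hαc (lt_mul_left hc hα))

end Real

open Real

theorem B_decreasing_and_root_bound
    (n : ℕ) (hn : 2 ≤ n) (α : ℝ) (hα : 1 < α)
    (B : ℝ → ℝ)
    (hB : ∀ x : ℝ, B x = α + x * (1 - α) + (n - 1 : ℝ) * x ^ (1 - α)) :
    StrictAntiOn B (Set.Ioi (0 : ℝ)) ∧
    0 < B (((n : ℝ) / (α - 1)) ^ (1/α)) ∧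
    (∀ xstar : ℝ, 0 < xstar → B xstar = 0 →
      ((n : ℝ) / (α - 1)) ^ (1/α) ≤ xstar) := by
  have hn2 : (2 : ℝ) ≤ n := by exact_mod_cast hn
  have hα1 : 0 < α - 1 := by linarith
  have hanti : StrictAntiOn B (Ioi 0) := by
    rw [show B = _ from funext hB]
    exact strictAntiOn_add_mul_add_mul_rpow (by linarith) (by linarith) (by linarith)
  set c := (n : ℝ) / (α - 1) with hc_def
  have hc : 0 < c := by positivity
  set y := c ^ (1 / α)
  have hy : 0 < y := rpow_pos_of_pos hc _
  have hyα : y ^ α = c := by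
    rw [← rpow_mul hc.le, one_div_mul_cancel (by linarith), rpow_one]
  have hBy : B y = α - y / c := by
    rw [hB, rpow_sub hy, rpow_one, hyα, hc_def]
    field_simp
    ring
  have hpos : 0 < B y := by
    have hαc : 1 < α * c := by
      rw [hc_def, mul_div_assoc', lt_div_iff₀ hα1]
      nlinarith
    rw [hBy, sub_pos, div_lt_iff₀ hc]
    exact rpow_one_div_lt_mul_self hc hα hαc
  refine ⟨hanti, hpos, fun xstar hxstar hroot => ?_⟩
  exact (hanti.le_iff_ge hxstar hy).1 (hroot ▸ hpos.le)
end

section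
/- For n ≥ 1 and α > 1, the inequality 1 + ((n-1)/α)·(n/(α-1))^{(1-α)/α} ≤ 1 + (n/α)^{1/α} holds. -/
theorem final_numeric_bound
    (n : ℕ) (hn : 1 ≤ n) (α : ℝ) (hα : 1 < α) :
    1 + ((n - 1 : ℝ) / α) * ((n : ℝ) / (α - 1)) ^ ((1 - α) / α)
      ≤ 1 + ((n : ℝ) / α) ^ (1 / α) := by
  have hα0 : (0:ℝ) < α := lt_trans one_pos hα
  have hα1 : (0:ℝ) < α - 1 := by linarith
  have hn1 : (1:ℝ) ≤ (n:ℝ) := by exact_mod_cast hn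
  have hn0 : (0:ℝ) < (n:ℝ) := lt_of_lt_of_le one_pos hn1
  have hx : (0:ℝ) < (n:ℝ) / (α - 1) := div_pos hn0 hα1
  set x : ℝ := (n:ℝ) / (α - 1) with hxdef
  set t : ℝ := (α - 1) / α with htdef
  have ht0 : 0 < t := div_pos hα1 hα0
  have ht1 : t ≤ 1 := by
    rw [htdef, div_le_one hα0]; linarith
  -- rewrite LHS power
  have hsplit : x ^ ((1 - α) / α) = x ^ (1 / α) * ((α - 1) / (n:ℝ)) := by
    have h1 : (1 - α) / α = 1 / α + (-1 : ℝ) := by field_simp; ring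
    rw [h1, Real.rpow_add hx, Real.rpow_neg_one]
    congr 1
    rw [hxdef, inv_div]
  -- rewrite RHS power
  have hR : ((n:ℝ) / α) ^ (1 / α) = x ^ (1 / α) * t ^ (1 / α) := by
    rw [← Real.mul_rpow (le_of_lt hx) (le_of_lt ht0)]
    congr 1
    rw [hxdef, htdef]
    field_simp
  rw [hsplit, hR]
  gcongr 1 + ?_
  have key : ((n:ℝ) - 1) / α * ((α - 1) / (n:ℝ)) ≤ t ^ (1 / α) := by
    have h1 : ((n:ℝ) - 1) / α * ((α - 1) / (n:ℝ)) = t * (((n:ℝ) - 1) / (n:ℝ)) := by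
      rw [htdef]; field_simp
    have h2 : ((n:ℝ) - 1) / (n:ℝ) ≤ 1 := by
      rw [div_le_one hn0]; linarith
    have h3 : t * (((n:ℝ) - 1) / (n:ℝ)) ≤ t :=
      mul_le_of_le_one_right (le_of_lt ht0) h2
    have h4 : t ≤ t ^ (1 / α) := by
      have : t ^ (1:ℝ) ≤ t ^ (1 / α) := by
        apply Real.rpow_le_rpow_of_exponent_ge ht0 ht1
        rw [div_le_one hα0]; linarith
      simpa using this
    linarith [h1 ▸ (h3.trans h4)]
  calc ((n:ℝ) - 1) / α * (x ^ (1 / α) * ((α - 1) / (n:ℝ)))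
      = (((n:ℝ) - 1) / α * ((α - 1) / (n:ℝ))) * x ^ (1 / α) := by ring
    _ ≤ t ^ (1 / α) * x ^ (1 / α) :=
        mul_le_mul_of_nonneg_right key (Real.rpow_nonneg (le_of_lt hx) _)
    _ = x ^ (1 / α) * t ^ (1 / α) := by ring
end

section
/- For fixed costs c_1,...,c_n with c_max = max_i c_i and n ≥ 2, there exists B_0 such that for all B > B_0, Σ_{i=1}^n (1 - (B - c_max)/(B - c_i)) < 1; consequently, since F(B,x) = Σ_i max(1 - x/(B - c_i), 0) is strictly decreasing in x on the region where it is positive, the solution x*(B) of F(B, x*(B)) = 1 satisfies x*(B) < B - c_max. -/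
/-!
Writing `1 - (B - cmax) / (B - cᵢ) = (cmax - cᵢ) / (B - cᵢ) ≤ (cmax - cᵢ) / (B - cmax)`, the sum is at
most `∑ᵢ (cmax - cᵢ) / (B - cmax)`, which is below `1` once `B > cmax + ∑ᵢ (cmax - cᵢ)`. This sum is
`F(B, B - cmax)`, as every summand is nonnegative there; since `F(B, ·)` is antitone, `F(B, x) = 1`
forces `x < B - cmax`.
-/

open Finset

section
variable {ι : Type*} [Fintype ι]

theorem antitone_sum_max_one_sub_div (d : ι → ℝ) (hd : ∀ i, 0 ≤ d i) :
    Antitone fun x => ∑ i, max (1 - x / d i) 0 := fun _ _ hxy =>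
  sum_le_sum fun i _ => max_le_max_right 0 (sub_le_sub_left (div_le_div_of_nonneg_right hxy (hd i)) 1)

theorem sum_max_one_sub_div_of_le (d : ι → ℝ) (x : ℝ) (hxd : ∀ i, x ≤ d i) (hd : ∀ i, 0 ≤ d i) :
    ∑ i, max (1 - x / d i) 0 = ∑ i, (1 - x / d i) :=
  sum_congr rfl fun i _ => max_eq_left (sub_nonneg.2 (div_le_one_of_le₀ (hxd i) (hd i)))

theorem sum_one_sub_div_lt_one (c : ι → ℝ) (m B : ℝ) (hcm : ∀ i, c i ≤ m)
    (hB : m + ∑ i, (m - c i) < B) : ∑ i, (1 - (B - m) / (B - c i)) < 1 := by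
  have hgap : 0 ≤ ∑ i, (m - c i) := sum_nonneg fun i _ => sub_nonneg.2 (hcm i)
  have hBm : 0 < B - m := by linarith
  calc ∑ i, (1 - (B - m) / (B - c i))
      = ∑ i, (m - c i) / (B - c i) := sum_congr rfl fun i _ => by
        rw [one_sub_div (by linarith [hcm i])]
        ring_nf
    _ ≤ ∑ i, (m - c i) / (B - m) := sum_le_sum fun i _ =>
        div_le_div_of_nonneg_left (sub_nonneg.2 (hcm i)) hBm (by linarith [hcm i])
    _ = (∑ i, (m - c i)) / (B - m) := (sum_div _ _ _).symm
    _ < 1 := (div_lt_one hBm).2 (by linarith)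

end

theorem tullock_all_active_for_large_budget_general
    (n : ℕ)
    (c : Fin n → ℝ)
    (cmax : ℝ) (hcmax : IsGreatest (Set.range c) cmax)
    (F : ℝ → ℝ → ℝ)
    (hF : ∀ B x : ℝ, F B x = ∑ i, max (1 - x / (B - c i)) 0) :
    ∃ B₀ : ℝ, ∀ B : ℝ, B₀ < B →
      (∑ i, (1 - (B - cmax) / (B - c i))) < 1 ∧
      (∀ x : ℝ, 0 ≤ x → F B x = 1 → x < B - cmax) := by
  have hle : ∀ i, c i ≤ cmax := fun i => hcmax.2 ⟨i, rfl⟩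
  refine ⟨cmax + ∑ i, (cmax - c i), fun B hB => ?_⟩
  have hsum := sum_one_sub_div_lt_one c cmax B hle hB
  have hBc : ∀ i, 0 ≤ B - c i := fun i => by
    linarith [hle i, sum_nonneg fun i (_ : i ∈ univ) => sub_nonneg.2 (hle i)]
  refine ⟨hsum, fun x _ hFx => ?_⟩
  by_contra! hx
  have hgap : ∀ i, B - cmax ≤ B - c i := fun i => by linarith [hle i]
  have hFle : F B x ≤ F B (B - cmax) := by
    simp only [hF]
    exact antitone_sum_max_one_sub_div _ hBc hx
  rw [hF B (B - cmax), sum_max_one_sub_div_of_le _ _ hgap hBc] at hFle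
  linarith

theorem tullock_all_active_for_large_budget
    (n : ℕ) (hn : 2 ≤ n)
    (c : Fin n → ℝ) (hc : ∀ i, 0 < c i)
    (cmax : ℝ) (hcmax : IsGreatest (Set.range c) cmax)
    (F : ℝ → ℝ → ℝ)
    (hF : ∀ B x : ℝ, F B x = ∑ i, max (1 - x / (B - c i)) 0) :
    ∃ B₀ : ℝ, ∀ B : ℝ, B₀ < B →
      (∑ i, (1 - (B - cmax) / (B - c i))) < 1 ∧
      (∀ x : ℝ, 0 ≤ x → F B x = 1 → x < B - cmax) :=
  tullock_all_active_for_large_budget_general n c cmax hcmax F hF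
end

section
/- Fix α > 1 and c > 0, and fix o > 0. The function u(b) = (b - c)/(1 + b^α o) for b ≥ 0 has derivative proportional to g(b) = 1 + b^α o + α b^{α-1} o (c - b); g is strictly increasing on [0, c) and strictly decreasing on (c, ∞), and u has a unique critical point which is the global maximum of u on [0, ∞). -/
/-!
Since `g' b = α (α - 1) o b ^ (α - 2) (c - b)`, `g` rises on `[0, c)` and falls on `(c, ∞)`.
All terms of `g` are nonnegative on `[0, c]`, so `g > 0` there, while
`g b = 1 + o b ^ (α - 1) (α c - (α - 1) b)` tends to `-∞`; hence `g` has exactly one zero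
`b₀ > 0`, where it changes sign from `+` to `-`. As `u' = g / (1 + b ^ α o) ^ 2`, the
first-derivative test makes `b₀` the maximum of `u` on `[0, ∞)`.
-/

open Set

namespace PaidAsBid

noncomputable def utility (α c o b : ℝ) : ℝ := (b - c) / (1 + b ^ α * o)

noncomputable def derivNum (α c o b : ℝ) : ℝ := 1 + b ^ α * o + α * b ^ (α - 1) * o * (c - b)

variable {α c o b b₀ : ℝ}

lemma one_add_rpow_mul_pos (hb : 0 ≤ b) (ho : 0 ≤ o) : 0 < 1 + b ^ α * o := by
  have := Real.rpow_nonneg hb α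
  positivity

lemma hasDerivAt_utility (hb : 0 < b) (ho : 0 ≤ o) :
    HasDerivAt (utility α c o) (derivNum α c o b / (1 + b ^ α * o) ^ 2) b := by
  have hden : HasDerivAt (fun x : ℝ => 1 + x ^ α * o) (α * b ^ (α - 1) * o) b :=
    ((Real.hasDerivAt_rpow_const (Or.inl hb.ne')).mul_const o).const_add 1
  refine (((hasDerivAt_id' b).sub_const c).div hden
    (one_add_rpow_mul_pos hb.le ho).ne').congr_deriv ?_
  rw [derivNum]
  ring

lemma continuousAt_utility (hα : 0 ≤ α) (ho : 0 ≤ o) (hb : 0 ≤ b) :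
    ContinuousAt (utility α c o) b :=
  ((continuous_id.sub continuous_const).continuousAt).div
    ((continuous_const.add ((Real.continuous_rpow_const hα).mul continuous_const)).continuousAt)
    (one_add_rpow_mul_pos hb ho).ne'

lemma hasDerivAt_derivNum (hb : 0 < b) :
    HasDerivAt (derivNum α c o) (α * (α - 1) * o * b ^ (α - 2) * (c - b)) b := by
  have hpow := Real.hasDerivAt_rpow_const (p := α) (Or.inl hb.ne')
  have hpow' := Real.hasDerivAt_rpow_const (p := α - 1) (Or.inl hb.ne')
  refine (((hpow.mul_const o).const_add 1).add
    (((hpow'.const_mul α).mul_const o).mul ((hasDerivAt_id' b).const_sub c))).congr_deriv ?_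
  rw [show α - 1 - 1 = α - 2 by ring]
  ring

lemma continuous_derivNum (hα : 1 ≤ α) : Continuous (derivNum α c o) := by
  have h₁ := Real.continuous_rpow_const (zero_le_one.trans hα)
  have h₂ := Real.continuous_rpow_const (sub_nonneg.2 hα)
  unfold derivNum
  fun_prop

lemma strictMonoOn_derivNum (hα : 1 < α) (ho : 0 < o) :
    StrictMonoOn (derivNum α c o) (Ico 0 c) := by
  refine strictMonoOn_of_deriv_pos (convex_Ico 0 c) (continuous_derivNum hα.le).continuousOn ?_
  rw [interior_Ico]
  intro b hb
  rw [(hasDerivAt_derivNum hb.1).deriv]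
  have := Real.rpow_pos_of_pos hb.1 (α - 2)
  have := sub_pos.2 hb.2
  have := sub_pos.2 hα
  positivity

lemma strictAntiOn_derivNum (hα : 1 < α) (hc : 0 ≤ c) (ho : 0 < o) :
    StrictAntiOn (derivNum α c o) (Ioi c) := by
  refine strictAntiOn_of_deriv_neg (convex_Ioi c) (continuous_derivNum hα.le).continuousOn ?_
  rw [interior_Ioi]
  intro b hb
  have hb_pos : 0 < b := hc.trans_lt hb
  rw [(hasDerivAt_derivNum hb_pos).deriv]
  have : 0 < α * (α - 1) * o * b ^ (α - 2) := by
    have := Real.rpow_pos_of_pos hb_pos (α - 2)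
    have := sub_pos.2 hα
    positivity
  exact mul_neg_of_pos_of_neg this (sub_neg.2 hb)

lemma derivNum_pos_of_le (hα : 0 ≤ α) (ho : 0 ≤ o) (hb : 0 ≤ b) (hbc : b ≤ c) :
    0 < derivNum α c o b := by
  have := Real.rpow_nonneg hb (α - 1)
  have := sub_nonneg.2 hbc
  have := one_add_rpow_mul_pos (α := α) hb ho
  unfold derivNum
  positivity

lemma derivNum_eq (hb : 0 < b) :
    derivNum α c o b = 1 + o * b ^ (α - 1) * (α * c - (α - 1) * b) := by
  rw [derivNum, Real.rpow_sub_one hb.ne']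
  field_simp
  ring

lemma exists_derivNum_neg (hα : 1 < α) (ho : 0 < o) :
    ∃ B, c < B ∧ derivNum α c o B < 0 := by
  set B := max 1 ((α * c + 2 / o) / (α - 1))
  have hα₁ : 0 < α - 1 := sub_pos.2 hα
  have hB₁ : 1 ≤ B := le_max_left _ _
  have hB : α * c + 2 / o ≤ (α - 1) * B := by
    rw [← div_le_iff₀' hα₁]; exact le_max_right _ _
  have h2o : 0 < 2 / o := by positivity
  refine ⟨B, by nlinarith, ?_⟩
  have hpow : 1 ≤ B ^ (α - 1) := Real.one_le_rpow hB₁ hα₁.le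
  rw [derivNum_eq (zero_lt_one.trans_le hB₁)]
  calc 1 + o * B ^ (α - 1) * (α * c - (α - 1) * B)
      ≤ 1 + o * B ^ (α - 1) * -(2 / o) := by gcongr; linarith
    _ = 1 - 2 * B ^ (α - 1) := by field_simp; ring
    _ < 0 := by linarith

lemma exists_derivNum_eq_zero (hα : 1 < α) (hc : 0 ≤ c) (ho : 0 < o) :
    ∃ b₀, c < b₀ ∧ derivNum α c o b₀ = 0 := by
  obtain ⟨B, hcB, hB⟩ := exists_derivNum_neg (c := c) hα ho
  have hgc : 0 < derivNum α c o c := derivNum_pos_of_le (by linarith) ho.le hc le_rfl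
  obtain ⟨b₀, hb₀, h⟩ := intermediate_value_Ioo' hcB.le
    (continuous_derivNum hα.le).continuousOn ⟨hB, hgc⟩
  exact ⟨b₀, hb₀.1, h⟩

lemma derivNum_pos_of_lt (hα : 1 < α) (hc : 0 ≤ c) (ho : 0 < o) (hcb₀ : c < b₀)
    (hb₀ : derivNum α c o b₀ = 0) (hb : 0 ≤ b) (hbb₀ : b < b₀) : 0 < derivNum α c o b := by
  rcases le_or_gt b c with hbc | hcb
  · exact derivNum_pos_of_le (by linarith) ho.le hb hbc
  · simpa [hb₀] using strictAntiOn_derivNum hα hc ho hcb hcb₀ hbb₀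

lemma derivNum_neg_of_gt (hα : 1 < α) (hc : 0 ≤ c) (ho : 0 < o) (hcb₀ : c < b₀)
    (hb₀ : derivNum α c o b₀ = 0) (hb : b₀ < b) : derivNum α c o b < 0 := by
  simpa [hb₀] using strictAntiOn_derivNum hα hc ho hcb₀ (hcb₀.trans hb) hb

lemma eq_of_derivNum_eq_zero (hα : 1 < α) (hc : 0 ≤ c) (ho : 0 < o) (hcb₀ : c < b₀)
    (hb₀ : derivNum α c o b₀ = 0) (hb : 0 ≤ b) (h : derivNum α c o b = 0) : b = b₀ := by
  rcases lt_trichotomy b b₀ with hbb₀ | rfl | hb₀b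
  · exact absurd h (derivNum_pos_of_lt hα hc ho hcb₀ hb₀ hb hbb₀).ne'
  · rfl
  · exact absurd h (derivNum_neg_of_gt hα hc ho hcb₀ hb₀ hb₀b).ne

lemma isMaxOn_utility (hα : 1 < α) (hc : 0 ≤ c) (ho : 0 < o) (hcb₀ : c < b₀)
    (hb₀ : derivNum α c o b₀ = 0) : IsMaxOn (utility α c o) (Ici 0) b₀ := by
  have hb₀pos : 0 < b₀ := hc.trans_lt hcb₀
  have hderiv {b : ℝ} (hb : 0 < b) := hasDerivAt_utility (α := α) (c := c) hb ho.le
  refine isMaxOn_Ici_of_deriv (continuousAt_utility (by linarith) ho.le le_rfl)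
    (continuousAt_utility (by linarith) ho.le hb₀pos.le)
    (fun b hb => (hderiv hb.1).differentiableAt.differentiableWithinAt)
    (fun b hb => (hderiv (hb₀pos.trans hb)).differentiableAt.differentiableWithinAt)
    (fun b hb => ?_) (fun b hb => ?_)
  · rw [(hderiv hb.1).deriv]
    exact div_nonneg (derivNum_pos_of_lt hα hc ho hcb₀ hb₀ hb.1.le hb.2).le (sq_nonneg _)
  · rw [(hderiv (hb₀pos.trans hb)).deriv]
    exact div_nonpos_of_nonpos_of_nonneg (derivNum_neg_of_gt hα hc ho hcb₀ hb₀ hb).le (sq_nonneg _)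

end PaidAsBid

open PaidAsBid in
theorem pab_utility_unique_max
    (α c o : ℝ) (hα : 1 < α) (hc : 0 < c) (ho : 0 < o)
    (u g : ℝ → ℝ)
    (hu : ∀ b : ℝ, u b = (b - c) / (1 + b ^ α * o))
    (hg : ∀ b : ℝ, g b = 1 + b ^ α * o + α * b ^ (α - 1) * o * (c - b)) :
    (∀ b : ℝ, 0 < b → deriv u b = g b / (1 + b ^ α * o) ^ 2) ∧
    StrictMonoOn g (Set.Ico 0 c) ∧
    StrictAntiOn g (Set.Ioi c) ∧
    ∃ b₀ : ℝ, 0 < b₀ ∧ g b₀ = 0 ∧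
      (∀ b : ℝ, 0 < b → g b = 0 → b = b₀) ∧
      (∀ b : ℝ, 0 ≤ b → u b ≤ u b₀) := by
  obtain rfl : u = utility α c o := funext hu
  obtain rfl : g = derivNum α c o := funext hg
  obtain ⟨b₀, hcb₀, hb₀⟩ := exists_derivNum_eq_zero hα hc.le ho
  exact ⟨fun b hb => (hasDerivAt_utility hb ho.le).deriv, strictMonoOn_derivNum hα ho,
    strictAntiOn_derivNum hα hc.le ho, b₀, hc.trans hcb₀, hb₀,
    fun b hb => eq_of_derivNum_eq_zero hα hc.le ho hcb₀ hb₀ hb.le,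
    fun b hb => isMaxOn_utility hα hc.le ho hcb₀ hb₀ hb⟩
end

section
/- For α > 1 and x ∈ (0, 1 - 1/α), define f(x) = x^{1/α}(1-x)/(α(1-x)-1) and Ψ(x) = (f(x) - x f'(x))/f(x)^2. Then Ψ is strictly decreasing on (0, 1 - 1/α). -/
/-!
Writing `u = 1 - x`, the quotient `Ψ` collapses to `Ψ(x) = g(x) / x ^ (1/α)` with the rational
factor `g(x) = α - 1 + 1/(α u) - 1/u²`. Hence `Ψ'(x) = (x g'(x) - g(x)/α) / x ^ (1 + 1/α)`, and
`α² u³ (x g'(x) - g(x)/α) = -(α-1)² u² - α x ((α-1)(1-x²) + 2αx)`, which is negative on all of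
`(0, 1)`.
-/

open Real Set

noncomputable def psiRational (α x : ℝ) : ℝ := α - 1 + 1 / (α * (1 - x)) - 1 / (1 - x) ^ 2

theorem hasDerivAt_div_rpow_const {g : ℝ → ℝ} {g' p x : ℝ} (hg : HasDerivAt g g' x)
    (hx : 0 < x) :
    HasDerivAt (fun y => g y / y ^ p) ((x * g' - p * g x) / (x * x ^ p)) x := by
  have hxp : 0 < x ^ p := rpow_pos_of_pos hx p
  refine (hg.div (hasDerivAt_rpow_const (p := p) (Or.inl hx.ne')) hxp.ne').congr_deriv ?_
  rw [rpow_sub_one hx.ne']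
  field_simp

theorem hasDerivAt_psiRational {α x : ℝ} (hα : α ≠ 0) (hx : x ≠ 1) :
    HasDerivAt (psiRational α) (1 / (α * (1 - x) ^ 2) - 2 / (1 - x) ^ 3) x := by
  have hu : 1 - x ≠ 0 := sub_ne_zero.mpr (Ne.symm hx)
  have h1 : HasDerivAt (fun y : ℝ => 1 - y) (-1) x := by
    simpa using (hasDerivAt_id x).const_sub 1
  have := ((hasDerivAt_const x (α - 1)).add ((hasDerivAt_const x 1).div (h1.const_mul α)
    (mul_ne_zero hα hu))).sub ((hasDerivAt_const x 1).div (h1.pow 2) (pow_ne_zero 2 hu))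
  refine this.congr_deriv ?_
  simp only [Pi.pow_apply]
  field_simp
  ring

theorem mul_deriv_psiRational_sub_neg {α x : ℝ} (hα : 1 < α) (hx₀ : 0 < x) (hx₁ : x < 1) :
    x * (1 / (α * (1 - x) ^ 2) - 2 / (1 - x) ^ 3) - 1 / α * psiRational α x < 0 := by
  have hu : 0 < 1 - x := by linarith
  have hα₀ : 0 < α := by linarith
  have key : x * (1 / (α * (1 - x) ^ 2) - 2 / (1 - x) ^ 3) - 1 / α * psiRational α x =
      (-(α - 1) ^ 2 * (1 - x) ^ 2 - α * x * ((α - 1) * (1 - x ^ 2) + 2 * α * x))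
        / (α ^ 2 * (1 - x) ^ 3) := by
    unfold psiRational
    field_simp
    ring
  rw [key]
  apply div_neg_of_neg_of_pos _ (by positivity)
  have hpos : 0 < (α - 1) * (1 - x ^ 2) + 2 * α * x := by
    nlinarith [mul_pos (sub_pos.mpr hα) (mul_pos hu (by linarith : 0 < 1 + x))]
  nlinarith [sq_nonneg ((α - 1) * (1 - x)), mul_pos (mul_pos hα₀ hx₀) hpos]

theorem strictAntiOn_psiRational_div_rpow {α : ℝ} (hα : 1 < α) :
    StrictAntiOn (fun x => psiRational α x / x ^ (1 / α)) (Ioo 0 1) := by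
  have hderiv : ∀ x ∈ Ioo 0 1, HasDerivAt (fun x => psiRational α x / x ^ (1 / α))
      ((x * (1 / (α * (1 - x) ^ 2) - 2 / (1 - x) ^ 3) - 1 / α * psiRational α x)
        / (x * x ^ (1 / α))) x := fun x hx =>
    hasDerivAt_div_rpow_const (hasDerivAt_psiRational (by positivity) hx.2.ne) hx.1
  refine strictAntiOn_of_deriv_neg (convex_Ioo 0 1)
    (fun x hx => (hderiv x hx).continuousAt.continuousWithinAt) fun x hx => ?_
  rw [interior_Ioo] at hx
  rw [(hderiv x hx).deriv]
  obtain ⟨hx₀, hx₁⟩ := hx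
  exact div_neg_of_neg_of_pos (mul_deriv_psiRational_sub_neg hα hx₀ hx₁) (by positivity)

theorem hasDerivAt_rpow_mul_div {α x : ℝ} (hα : α ≠ 0) (hx₀ : 0 < x) (hx₁ : x ≠ 1)
    (hD : α * (1 - x) - 1 ≠ 0) :
    HasDerivAt (fun y => y ^ (1 / α) * (1 - y) / (α * (1 - y) - 1))
      (x ^ (1 / α) * (1 - x) / (α * (1 - x) - 1)
        * (1 / (α * x) - 1 / (1 - x) + α / (α * (1 - x) - 1))) x := by
  have hu : 1 - x ≠ 0 := sub_ne_zero.mpr (Ne.symm hx₁)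
  have h1 : HasDerivAt (fun y : ℝ => 1 - y) (-1) x := by
    simpa using (hasDerivAt_id x).const_sub 1
  have := ((hasDerivAt_rpow_const (p := 1 / α) (Or.inl hx₀.ne')).mul h1).div
    ((h1.const_mul α).sub_const 1) hD
  refine this.congr_deriv ?_
  rw [rpow_sub_one hx₀.ne', Pi.mul_apply]
  field_simp
  ring

theorem psi_eq_psiRational_div_rpow {α x : ℝ} (hα : 0 < α) (hx : x ∈ Ioo 0 (1 - 1 / α))
    {f : ℝ → ℝ} (hf : ∀ x : ℝ, f x = x ^ (1 / α) * (1 - x) / (α * (1 - x) - 1)) :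
    (f x - x * deriv f x) / (f x) ^ 2 = psiRational α x / x ^ (1 / α) := by
  obtain ⟨hx₀, hx₁⟩ := hx
  have hu : 0 < 1 - x := by linarith [one_div_pos.mpr hα]
  have hD : 0 < α * (1 - x) - 1 := by
    have := (div_lt_iff₀ hα).mp (by linarith : 1 / α < 1 - x)
    linarith
  have hxp : 0 < x ^ (1 / α) := rpow_pos_of_pos hx₀ _
  obtain rfl : f = fun y => y ^ (1 / α) * (1 - y) / (α * (1 - y) - 1) := funext hf
  rw [(hasDerivAt_rpow_mul_div hα.ne' hx₀ (by linarith) hD.ne').deriv, psiRational]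
  field_simp
  ring

theorem psi_strict_anti
    (α : ℝ) (hα : 1 < α)
    (f Ψ : ℝ → ℝ)
    (hf : ∀ x : ℝ, f x = x ^ (1/α) * (1 - x) / (α * (1 - x) - 1))
    (hΨ : ∀ x : ℝ, Ψ x = (f x - x * deriv f x) / (f x) ^ 2) :
    StrictAntiOn Ψ (Set.Ioo 0 (1 - 1/α)) := by
  have hα₀ : 0 < α := by linarith
  have hsub : Ioo 0 (1 - 1 / α) ⊆ Ioo 0 1 :=
    Ioo_subset_Ioo_right (by linarith [one_div_pos.mpr hα₀])
  refine ((strictAntiOn_psiRational_div_rpow hα).mono hsub).congr fun x hx => ?_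
  rw [hΨ, psi_eq_psiRational_div_rpow hα₀ hx hf]
end

section
/- For 1 < α ≤ 5 and a ∈ (0, 1 - 1/α), the inequality 1/(αa) + 1/(α(1-a)-1) + 1/α > 1 holds; in particular (1-a)f'(a)/f(a) + b f'(b)/f(b) > 1 - 1/r for any b ∈ (0, 1-1/α) and any r > 1, where f(x) = x^{1/α}(1-x)/(α(1-x)-1). -/
/-- Logarithmic derivative of `f x = x^(1/α) (1-x) / (α(1-x)-1)` on `(0, 1-1/α)`. -/
lemma pab_deriv_div (α : ℝ) (hα1 : 1 < α) (f : ℝ → ℝ)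
    (hf : ∀ x : ℝ, f x = x ^ (1/α) * (1 - x) / (α * (1 - x) - 1))
    (x : ℝ) (hx0 : 0 < x) (hx1 : x < 1 - 1/α) :
    deriv f x / f x = 1 / (α * x) + 1 / ((1 - x) * (α * (1 - x) - 1)) := by
  have hα0 : (0:ℝ) < α := by linarith
  have hxlt1 : x < 1 := by
    have : (0:ℝ) < 1/α := by positivity
    linarith
  have h1x : 0 < 1 - x := by linarith
  have hD : 0 < α * (1 - x) - 1 := by
    have h : 1/α < 1 - x := by linarith
    have := (div_lt_iff₀ hα0).mp (by linarith : 1/α < 1 - x)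
    nlinarith
  have hc : 0 < x ^ (1/α) := Real.rpow_pos_of_pos hx0 _
  have h1 : HasDerivAt (fun y : ℝ => y ^ (1/α)) ((1/α) * x ^ (1/α - 1)) x :=
    Real.hasDerivAt_rpow_const (Or.inl hx0.ne')
  have h2 : HasDerivAt (fun y : ℝ => 1 - y) (-1) x := (hasDerivAt_id x).const_sub 1
  have hu : HasDerivAt (fun y : ℝ => y ^ (1/α) * (1 - y))
      ((1/α) * x ^ (1/α - 1) * (1 - x) + x ^ (1/α) * (-1)) x := h1.mul h2
  have hv : HasDerivAt (fun y : ℝ => α * (1 - y) - 1) (α * (-1)) x :=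
    (h2.const_mul α).sub_const 1
  have hdiv := hu.div hv hD.ne'
  have hfeq : f = fun y : ℝ => y ^ (1/α) * (1 - y) / (α * (1 - y) - 1) := funext hf
  have hderiv : deriv f x =
      (((1/α) * x ^ (1/α - 1) * (1 - x) + x ^ (1/α) * (-1)) * (α * (1 - x) - 1)
        - x ^ (1/α) * (1 - x) * (α * (-1))) / (α * (1 - x) - 1) ^ 2 := by
    rw [hfeq]; exact hdiv.deriv
  have hpow : x ^ (1/α - 1) = x ^ (1/α) / x := by
    rw [Real.rpow_sub hx0, Real.rpow_one]
  rw [hderiv, hf x, hpow]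
  field_simp
  ring

theorem pab_key_inequality
    (α : ℝ) (hα1 : 1 < α) (hα5 : α ≤ 5)
    (a b r : ℝ)
    (ha : a ∈ Set.Ioo (0 : ℝ) (1 - 1/α))
    (hb : b ∈ Set.Ioo (0 : ℝ) (1 - 1/α))
    (hr : 1 < r)
    (f : ℝ → ℝ)
    (hf : ∀ x : ℝ, f x = x ^ (1/α) * (1 - x) / (α * (1 - x) - 1)) :
    1 < 1 / (α * a) + 1 / (α * (1 - a) - 1) + 1 / α ∧
    1 - 1/r < (1 - a) * deriv f a / f a + b * deriv f b / f b := by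
  obtain ⟨ha0, ha1⟩ := ha
  obtain ⟨hb0, hb1⟩ := hb
  have hα0 : (0:ℝ) < α := by linarith
  have hiα : (0:ℝ) < 1/α := by positivity
  have halt1 : a < 1 := by linarith
  have hblt1 : b < 1 := by linarith
  have h1a : 0 < 1 - a := by linarith
  have h1b : 0 < 1 - b := by linarith
  have hDa : 0 < α * (1 - a) - 1 := by
    have := (div_lt_iff₀ hα0).mp (by linarith : 1/α < 1 - a); nlinarith
  have hDb : 0 < α * (1 - b) - 1 := by
    have := (div_lt_iff₀ hα0).mp (by linarith : 1/α < 1 - b); nlinarith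
  have hαa : 0 < α * a := by positivity
  have hαb : 0 < α * b := by positivity
  -- the key AM-HM style inequality
  have hkey : 4 / (α - 1) ≤ 1 / (α * a) + 1 / (α * (1 - a) - 1) := by
    rw [div_add_div _ _ hαa.ne' hDa.ne', div_le_div_iff₀ (by linarith) (by positivity)]
    nlinarith [sq_nonneg (α * a - (α * (1 - a) - 1))]
  have h41 : (1:ℝ) ≤ 4 / (α - 1) := by
    rw [le_div_iff₀ (by linarith)]; linarith
  refine ⟨by linarith, ?_⟩
  have hda := pab_deriv_div α hα1 f hf a ha0 ha1
  have hdb := pab_deriv_div α hα1 f hf b hb0 hb1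
  have hea : (1 - a) * deriv f a / f a =
      (1 - a) / (α * a) + 1 / (α * (1 - a) - 1) := by
    rw [mul_div_assoc, hda]
    field_simp
  have heb : b * deriv f b / f b =
      1 / α + b / ((1 - b) * (α * (1 - b) - 1)) := by
    rw [mul_div_assoc, hdb]
    field_simp
  rw [hea, heb]
  have hsplit : (1 - a) / (α * a) = 1 / (α * a) - 1 / α := by
    field_simp
  have hpos : 0 < b / ((1 - b) * (α * (1 - b) - 1)) := by positivity
  have hr0 : 0 < 1 / r := by positivity
  rw [hsplit]
  linarith
end

section
/- For n ≥ 2, α > 1, and a cost vector c = (c_1,...,c_n) with all entries positive that maximizes SC(c) = (Σ_i c_i^{1-α})/(Σ_i c_i^{-α}) subject to c_1 = 1 ≤ c_i, the first-order stationarity conditions in each coordinate i > 1 simplify to (1-α)(1+G)c_i + α(1+H) = 0 where G = Σ_{j>1} c_j^{-α} and H = Σ_{j>1} c_j^{1-α}; hence c_i = c_j for all i, j > 1, i.e., the worst-case cost vector has the form [1, r, r, ..., r]. -/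
open Finset

lemma stationary_aux (A B α t₀ : ℝ) (ht : 1 < t₀)
    (hB : 0 < B + t₀ ^ (-α))
    (hmax : IsLocalMax (fun t : ℝ => (A + t ^ (1 - α)) / (B + t ^ (-α))) t₀) :
    (1 - α) * (B + t₀ ^ (-α)) * t₀ + α * (A + t₀ ^ (1 - α)) = 0 := by
  have ht0 : (0:ℝ) < t₀ := lt_trans one_pos ht
  have h1 : HasDerivAt (fun t : ℝ => A + t ^ (1 - α)) ((1 - α) * t₀ ^ ((1 - α) - 1)) t₀ :=
    (Real.hasDerivAt_rpow_const (Or.inl ht0.ne')).const_add A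
  have h2 : HasDerivAt (fun t : ℝ => B + t ^ (-α)) ((-α) * t₀ ^ (-α - 1)) t₀ :=
    (Real.hasDerivAt_rpow_const (Or.inl ht0.ne')).const_add B
  have hd := h1.div h2 hB.ne'
  have hz := hmax.hasDerivAt_eq_zero hd
  have hnum : (1 - α) * t₀ ^ ((1 - α) - 1) * (B + t₀ ^ (-α))
      - (A + t₀ ^ (1 - α)) * ((-α) * t₀ ^ (-α - 1)) = 0 := by
    rcases div_eq_zero_iff.mp hz with h | h
    · exact h
    · exact absurd h (pow_ne_zero 2 hB.ne')
  have he1 : (1 - α) - 1 = -α := by ring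
  have he2 : t₀ ^ (-α - 1) = t₀ ^ (-α) / t₀ := by
    rw [Real.rpow_sub ht0, Real.rpow_one]
  have hv : t₀ ^ (1 - α) = t₀ * t₀ ^ (-α) := by
    rw [show (1 - α) = 1 + (-α) by ring, Real.rpow_add ht0, Real.rpow_one]
  rw [he1, he2, hv] at hnum
  rw [hv]
  have hu : (0:ℝ) < t₀ ^ (-α) := Real.rpow_pos_of_pos ht0 _
  have key : ((1 - α) * (B + t₀ ^ (-α)) * t₀ + α * (A + t₀ * t₀ ^ (-α))) * t₀ ^ (-α) = 0 := by
    field_simp at hnum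
    nlinarith [hnum]
  exact (mul_eq_zero.mp key).resolve_right hu.ne'

theorem dsic_worst_case_form
    (n : ℕ) (hn : 2 ≤ n) (hn0 : 0 < n) (α : ℝ) (hα : 1 < α)
    (SC : (Fin n → ℝ) → ℝ)
    (hSC : ∀ c : Fin n → ℝ, SC c = (∑ i, c i ^ (1 - α)) / (∑ i, c i ^ (-α)))
    (c : Fin n → ℝ)
    (hc1 : c ⟨0, hn0⟩ = 1)
    (hcint : ∀ i : Fin n, i ≠ ⟨0, hn0⟩ → 1 < c i)
    (hmax : ∀ c' : Fin n → ℝ, c' ⟨0, hn0⟩ = 1 → (∀ i, 1 ≤ c' i) → SC c' ≤ SC c) :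
    (∀ i : Fin n, i ≠ ⟨0, hn0⟩ →
      (1 - α) * (1 + ∑ j ∈ univ.filter (fun j => j ≠ ⟨0, hn0⟩), c j ^ (-α)) * c i
        + α * (1 + ∑ j ∈ univ.filter (fun j => j ≠ ⟨0, hn0⟩), c j ^ (1 - α)) = 0) ∧
    (∀ i j : Fin n, i ≠ ⟨0, hn0⟩ → j ≠ ⟨0, hn0⟩ → c i = c j) := by
  set i0 : Fin n := ⟨0, hn0⟩ with hi0
  have hpos : ∀ j, 0 < c j := by
    intro j
    by_cases hj : j = i0
    · rw [hj, hc1]; norm_num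
    · exact lt_trans one_pos (hcint j hj)
  -- rewrite the filtered sums as full sums
  have hfilter : ∀ p : ℝ, 1 + ∑ j ∈ univ.filter (fun j => j ≠ i0), c j ^ p
      = ∑ j, c j ^ p := by
    intro p
    rw [Finset.filter_ne' univ i0]
    rw [show (1:ℝ) = c i0 ^ p by rw [hc1, Real.one_rpow]]
    exact Finset.add_sum_erase univ (fun j => c j ^ p) (mem_univ i0)
  -- key stationarity claim
  have main : ∀ i : Fin n, i ≠ i0 →
      (1 - α) * (∑ j, c j ^ (-α)) * c i + α * (∑ j, c j ^ (1 - α)) = 0 := by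
    intro i hi
    set A : ℝ := ∑ j ∈ univ.erase i, c j ^ (1 - α) with hA
    set B : ℝ := ∑ j ∈ univ.erase i, c j ^ (-α) with hBdef
    have hsplit : ∀ p : ℝ, ∀ t : ℝ, 0 < t →
        ∑ j, (Function.update c i t) j ^ p
          = t ^ p + ∑ j ∈ univ.erase i, c j ^ p := by
      intro p t _
      have : ∀ j, (Function.update c i t) j ^ p
          = Function.update (fun k => c k ^ p) i (t ^ p) j := by
        intro j
        exact (Function.apply_update (fun _ v => v ^ p) c i t j)
      rw [Finset.sum_congr rfl (fun j _ => this j)]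
      rw [Finset.sum_update_of_mem (mem_univ i)]
      congr 1
      exact Finset.sum_congr (by rw [Finset.sdiff_singleton_eq_erase]) (fun _ _ => rfl)
    have hsum : ∀ p : ℝ, ∑ j, c j ^ p = c i ^ p + ∑ j ∈ univ.erase i, c j ^ p := by
      intro p
      exact (Finset.add_sum_erase univ (fun j => c j ^ p) (mem_univ i)).symm
    have hBpos : 0 < B + c i ^ (-α) := by
      have : 0 < ∑ j, c j ^ (-α) :=
        Finset.sum_pos (fun j _ => Real.rpow_pos_of_pos (hpos j) _) ⟨i, mem_univ i⟩
      rw [hsum (-α)] at this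
      linarith [this]
    have hci : 1 < c i := hcint i hi
    have hloc : IsLocalMax (fun t : ℝ => (A + t ^ (1 - α)) / (B + t ^ (-α))) (c i) := by
      have hnhds : Set.Ioi (1:ℝ) ∈ nhds (c i) := isOpen_Ioi.mem_nhds hci
      filter_upwards [hnhds] with t ht
      have ht0 : (0:ℝ) < t := lt_trans one_pos ht
      have hup0 : Function.update c i t i0 = 1 := by
        rw [Function.update_of_ne (Ne.symm hi)]; exact hc1
      have hge : ∀ j, 1 ≤ Function.update c i t j := by
        intro j
        by_cases hj : j = i
        · rw [hj, Function.update_self]; exact le_of_lt ht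
        · rw [Function.update_of_ne hj]
          by_cases hj0 : j = i0
          · rw [hj0, hc1]
          · exact le_of_lt (hcint j hj0)
      have hle := hmax (Function.update c i t) hup0 hge
      rw [hSC, hSC] at hle
      have e1 := hsplit (1 - α) t ht0
      have e2 := hsplit (-α) t ht0
      simp only [e1, e2] at hle
      calc (A + t ^ (1 - α)) / (B + t ^ (-α))
          = (t ^ (1 - α) + A) / (t ^ (-α) + B) := by ring_nf
        _ ≤ (∑ j, c j ^ (1 - α)) / (∑ j, c j ^ (-α)) := hle
        _ = (A + c i ^ (1 - α)) / (B + c i ^ (-α)) := by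
            rw [hsum (1 - α), hsum (-α), ← hA, ← hBdef, add_comm A, add_comm B]
    have hst := stationary_aux A B α (c i) hci hBpos hloc
    rw [hsum (1 - α), hsum (-α)]
    calc (1 - α) * (c i ^ (-α) + B) * c i + α * (c i ^ (1 - α) + A)
        = (1 - α) * (B + c i ^ (-α)) * c i + α * (A + c i ^ (1 - α)) := by ring
      _ = 0 := hst
  constructor
  · intro i hi
    rw [hfilter (-α), hfilter (1 - α)]
    exact main i hi
  · intro i j hi hj
    have h1 := main i hi
    have h2 := main j hj
    have hSpos : 0 < ∑ j, c j ^ (-α) :=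
      Finset.sum_pos (fun k _ => Real.rpow_pos_of_pos (hpos k) _) ⟨i0, mem_univ i0⟩
    have hne : (1 - α) * (∑ j, c j ^ (-α)) ≠ 0 := by
      apply mul_ne_zero
      · linarith
      · exact hSpos.ne'
    have : (1 - α) * (∑ j, c j ^ (-α)) * c i
        = (1 - α) * (∑ j, c j ^ (-α)) * c j := by linarith
    exact mul_left_cancel₀ hne this
end
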